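/- Let A, X ∈ ℂ^{m×n} and W ∈ ℂ^{n×m}. The following are equivalent: (i) X is a {1',2',4'}-inverse of A; (ii) rank(WAW) = rank(A), XWAWX = X, and the column space (range) of X equals the column space of (AW)*; (iii) rank(WAW) = rank(A), AWXWA = A, and the column space of X equals the column space of (AW)*. -/

import Mathlib

/-!
Write `B = A * W` and `E = X * W * A * W`. Equation 1' gives `B * E = B`; once `E` is Hermitian
this reads `E * Bᴴ = Bᴴ`, and together with 2' it exhibits each of `X` and `Bᴴ` as a right
multiple of the other. Conversely, if `B * E = B` and `E = Bᴴ * C`, then `Eᴴ * E = E`, so `E` is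
Hermitian; this recovers 4' from (ii) and from (iii). Finally `rank (W * A * W) = rank A` forces
`rank B = rank A`, so `A = B * S` for some `S`, which is how 1' is recovered from 2'.

Equation 1' (resp. 2') says that `X` is a `W`-weighted inner (resp. outer) inverse of `A`.
-/

open Matrix

namespace Matrix

theorem range_mulVecLin_mul_le {R l m n : Type*} [CommSemiring R] [Fintype m] [Fintype n]
    (M : Matrix l m R) (N : Matrix m n R) :
    LinearMap.range (M * N).mulVecLin ≤ LinearMap.range M.mulVecLin := by
  rw [mulVecLin_mul]
  exact LinearMap.range_comp_le_range _ _

theorem exists_mul_eq_of_range_mulVecLin_le {R l m n : Type*} [CommSemiring R] [Fintype m]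
    [Fintype n] {M : Matrix l m R} {N : Matrix l n R}
    (h : LinearMap.range N.mulVecLin ≤ LinearMap.range M.mulVecLin) :
    ∃ C : Matrix m n R, M * C = N := by
  classical
  have hcol : ∀ j, ∃ c, M *ᵥ c = N.col j := fun j => h ⟨Pi.single j 1, by simp⟩
  choose c hc using hcol
  exact ⟨(of c)ᵀ, ext fun i j => congrFun (hc j) i⟩

theorem range_mulVecLin_mul_eq_of_rank_eq {K l m n : Type*} [Field K] [Fintype m] [Fintype n]
    {M : Matrix l m K} {N : Matrix m n K} (h : (M * N).rank = M.rank) :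
    LinearMap.range (M * N).mulVecLin = LinearMap.range M.mulVecLin :=
  Submodule.eq_of_le_of_finrank_le (range_mulVecLin_mul_le M N) h.ge

theorem isHermitian_of_mul_eq_of_conjTranspose_mul_eq {R l m : Type*} [CommSemiring R]
    [StarRing R] [Fintype l] [Fintype m] {B : Matrix l m R} {E : Matrix m m R} {C : Matrix l m R}
    (hB : B * E = B) (hE : Bᴴ * C = E) : E.IsHermitian := by
  have hEE : Eᴴ * E = E :=
    calc Eᴴ * E = Eᴴ * (Bᴴ * C) := by rw [hE]
      _ = (B * E)ᴴ * C := by rw [conjTranspose_mul, Matrix.mul_assoc]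
      _ = E := by rw [hB, hE]
  exact hEE ▸ isHermitian_conjTranspose_mul_self E

end Matrix

namespace WeightedInverse

variable {R m n : Type*} [Fintype m] [Fintype n] {A X : Matrix m n R} {W : Matrix n m R}

theorem rank_mul_mul_eq_of_inner [CommSemiring R] [StrongRankCondition R]
    (h1 : A * W * X * W * A = A) : (W * A * W).rank = A.rank := by
  refine le_antisymm ((rank_mul_le_left _ _).trans (rank_mul_le_right _ _)) ?_
  have hA : (A * W * X) * (W * A) = A := by simpa only [Matrix.mul_assoc] using h1
  have hWA : (W * A * W) * (X * (W * A)) = W * A := by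
    simpa only [← Matrix.mul_assoc] using congrArg (W * ·) h1
  calc A.rank = ((A * W * X) * (W * A)).rank := by rw [hA]
    _ ≤ (W * A).rank := rank_mul_le_right _ _
    _ = ((W * A * W) * (X * (W * A))).rank := by rw [hWA]
    _ ≤ (W * A * W).rank := rank_mul_le_left _ _

theorem mul_mul_eq_of_inner [Semiring R] (h1 : A * W * X * W * A = A) :
    A * W * (X * W * A * W) = A * W := by
  simp only [← Matrix.mul_assoc]
  rw [h1]

section StarRing

variable [CommSemiring R] [StarRing R]

theorem range_eq_of_inner_of_outer_of_isHermitian (h1 : A * W * X * W * A = A)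
    (h2 : X * W * A * W * X = X) (h4 : (X * W * A * W).IsHermitian) :
    LinearMap.range X.mulVecLin = LinearMap.range ((A * W)ᴴ).mulVecLin := by
  have hX : (A * W)ᴴ * ((X * W)ᴴ * X) = X := by
    rw [← Matrix.mul_assoc, ← conjTranspose_mul, ← Matrix.mul_assoc, h4.eq, h2]
  have hB : X * (W * A * W * (A * W)ᴴ) = (A * W)ᴴ := by
    calc X * (W * A * W * (A * W)ᴴ) = (X * W * A * W)ᴴ * (A * W)ᴴ := by
          rw [h4.eq]; simp only [Matrix.mul_assoc]
      _ = (A * W)ᴴ := by rw [← conjTranspose_mul, mul_mul_eq_of_inner h1]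
  exact le_antisymm (hX ▸ range_mulVecLin_mul_le _ _) (hB ▸ range_mulVecLin_mul_le _ _)

theorem mul_conjTranspose_eq_of_outer (h2 : X * W * A * W * X = X)
    (hrg : LinearMap.range ((A * W)ᴴ).mulVecLin ≤ LinearMap.range X.mulVecLin) :
    X * W * A * W * (A * W)ᴴ = (A * W)ᴴ := by
  obtain ⟨V, hV⟩ := exists_mul_eq_of_range_mulVecLin_le hrg
  rw [← hV, ← Matrix.mul_assoc, h2]

theorem isHermitian_of_outer (h2 : X * W * A * W * X = X)
    (hrg : LinearMap.range ((A * W)ᴴ).mulVecLin ≤ LinearMap.range X.mulVecLin) :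
    (X * W * A * W).IsHermitian := by
  have hB : A * W * (X * W * A * W)ᴴ = A * W := by
    simpa only [conjTranspose_mul, conjTranspose_conjTranspose]
      using congrArg conjTranspose (mul_conjTranspose_eq_of_outer h2 hrg)
  have hE : (A * W)ᴴ * (X * W)ᴴ = (X * W * A * W)ᴴ := by
    simp only [← conjTranspose_mul, Matrix.mul_assoc]
  exact isHermitian_conjTranspose_iff.mp (isHermitian_of_mul_eq_of_conjTranspose_mul_eq hB hE)

theorem isHermitian_of_inner (h1 : A * W * X * W * A = A)
    (hrg : LinearMap.range X.mulVecLin ≤ LinearMap.range ((A * W)ᴴ).mulVecLin) :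
    (X * W * A * W).IsHermitian := by
  obtain ⟨U, hU⟩ := exists_mul_eq_of_range_mulVecLin_le hrg
  have hE : (A * W)ᴴ * (U * (W * A * W)) = X * W * A * W := by
    rw [← hU]; simp only [Matrix.mul_assoc]
  exact isHermitian_of_mul_eq_of_conjTranspose_mul_eq (mul_mul_eq_of_inner h1) hE

theorem outer_of_inner (h1 : A * W * X * W * A = A)
    (hrg : LinearMap.range X.mulVecLin ≤ LinearMap.range ((A * W)ᴴ).mulVecLin) :
    X * W * A * W * X = X := by
  obtain ⟨U, hU⟩ := exists_mul_eq_of_range_mulVecLin_le hrg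
  calc X * W * A * W * X = X * W * A * W * ((A * W)ᴴ * U) := by rw [hU]
    _ = (X * W * A * W)ᴴ * (A * W)ᴴ * U := by
      rw [(isHermitian_of_inner h1 hrg).eq, ← Matrix.mul_assoc]
    _ = X := by rw [← conjTranspose_mul, mul_mul_eq_of_inner h1, hU]

end StarRing

theorem inner_of_outer [Field R] [StarRing R] (hr : (W * A * W).rank = A.rank)
    (h2 : X * W * A * W * X = X)
    (hrg : LinearMap.range ((A * W)ᴴ).mulVecLin ≤ LinearMap.range X.mulVecLin) :
    A * W * X * W * A = A := by
  have hrAW : (A * W).rank = A.rank := by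
    refine le_antisymm (rank_mul_le_left A W) ?_
    calc A.rank = (W * (A * W)).rank := by rw [← hr, Matrix.mul_assoc]
      _ ≤ (A * W).rank := rank_mul_le_right W (A * W)
  obtain ⟨S, hS⟩ :=
    exists_mul_eq_of_range_mulVecLin_le (range_mulVecLin_mul_eq_of_rank_eq hrAW).ge
  have hB : A * W * (X * W * A * W) = A * W := by
    simpa only [conjTranspose_mul, conjTranspose_conjTranspose,
      (isHermitian_of_outer h2 hrg).eq]
      using congrArg conjTranspose (mul_conjTranspose_eq_of_outer h2 hrg)
  calc A * W * X * W * A = A * W * X * W * (A * W * S) := by rw [hS]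
    _ = A * W * (X * W * A * W) * S := by simp only [Matrix.mul_assoc]
    _ = A := by rw [hB, hS]

end WeightedInverse

open WeightedInverse

/-- characterizations of `{1',2',4'}`-inverses via rank, outer/inner
equations and column spaces. -/
theorem stmt5 (m n : ℕ) (A X : Matrix (Fin m) (Fin n) ℂ) (W : Matrix (Fin n) (Fin m) ℂ) :
    ((A * W * X * W * A = A ∧
        X * W * A * W * X = X ∧
        (X * W * A * W)ᴴ = X * W * A * W) ↔
      ((W * A * W).rank = A.rank ∧
        X * W * A * W * X = X ∧
        LinearMap.range X.mulVecLin = LinearMap.range ((A * W)ᴴ).mulVecLin)) ∧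
    (((W * A * W).rank = A.rank ∧
        X * W * A * W * X = X ∧
        LinearMap.range X.mulVecLin = LinearMap.range ((A * W)ᴴ).mulVecLin) ↔
      ((W * A * W).rank = A.rank ∧
        A * W * X * W * A = A ∧
        LinearMap.range X.mulVecLin = LinearMap.range ((A * W)ᴴ).mulVecLin)) :=
  ⟨⟨fun ⟨h1, h2, h4⟩ => ⟨rank_mul_mul_eq_of_inner h1, h2,
      range_eq_of_inner_of_outer_of_isHermitian h1 h2 h4⟩,
    fun ⟨hr, h2, hrg⟩ =>
      ⟨inner_of_outer hr h2 hrg.ge, h2, isHermitian_of_outer h2 hrg.ge⟩⟩,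
  ⟨fun ⟨hr, h2, hrg⟩ => ⟨hr, inner_of_outer hr h2 hrg.ge, hrg⟩,
    fun ⟨hr, h1, hrg⟩ => ⟨hr, outer_of_inner h1 hrg.le, hrg⟩⟩⟩
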